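/- arXiv:1409.3345 — 2 statements merged into one kernel-verified Lean document; each statement's English description precedes it below -/
import Mathlib

section
/- Two sampled symbols a, a' : Z/2NZ × Z/2NZ → C yield the same Weyl matrix Op(a) = Op(a') if and only if Δ(a) = Δ(a'), where Δ(a)_{j,k} = a(j,k) + (-1)^k a(j+N,k) + (-1)^j a(j,k+N) + (-1)^{j+k+N} a(j+N,k+N) for j,k = 0,...,N-1. -/
open scoped BigOperators
open Complex

noncomputable section

instance nz2N (N : ℕ) [NeZero N] : NeZero (2 * N) :=
  ⟨Nat.mul_ne_zero two_ne_zero (NeZero.ne N)⟩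
/-- Discrete Fourier transform in the second variable of a sampled symbol. -/
def F2 (N : ℕ) [NeZero N] (a : ZMod (2 * N) → ZMod (2 * N) → ℂ) (m r : ZMod (2 * N)) : ℂ :=
  ∑ k : ZMod (2 * N),
    a m k * Complex.exp (-2 * (Real.pi : ℂ) * Complex.I * (r.val : ℂ) * (k.val : ℂ) / (2 * N : ℂ))

/-- The Weyl matrix of a sampled symbol, given by its matrix elements
`(Op a)_{n,j} = (1/(2N)) [F₂a(j+n, j-n) + F₂a(j+n+N, j-n+N)]` (arguments mod 2N). -/
def OpW (N : ℕ) [NeZero N] (a : ZMod (2 * N) → ZMod (2 * N) → ℂ) :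
    Matrix (ZMod N) (ZMod N) ℂ :=
  fun n j =>
    (1 / (2 * N : ℂ)) *
      (F2 N a ((j.val : ZMod (2 * N)) + (n.val : ZMod (2 * N)))
          ((j.val : ZMod (2 * N)) - (n.val : ZMod (2 * N))) +
       F2 N a ((j.val : ZMod (2 * N)) + (n.val : ZMod (2 * N)) + (N : ZMod (2 * N)))
          ((j.val : ZMod (2 * N)) - (n.val : ZMod (2 * N)) + (N : ZMod (2 * N))))
/-- The map `Δ` sending a `2N × 2N` sampled symbol to an `N × N` matrix. -/
def Delta (N : ℕ) [NeZero N] (a : ZMod (2 * N) → ZMod (2 * N) → ℂ) :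
    Matrix (ZMod N) (ZMod N) ℂ :=
  fun j k =>
    a ((j.val : ZMod (2 * N))) ((k.val : ZMod (2 * N))) +
    (-1 : ℂ) ^ k.val * a ((j.val : ZMod (2 * N)) + (N : ZMod (2 * N))) ((k.val : ZMod (2 * N))) +
    (-1 : ℂ) ^ j.val * a ((j.val : ZMod (2 * N))) ((k.val : ZMod (2 * N)) + (N : ZMod (2 * N))) +
    (-1 : ℂ) ^ (j.val + k.val + N) *
      a ((j.val : ZMod (2 * N)) + (N : ZMod (2 * N))) ((k.val : ZMod (2 * N)) + (N : ZMod (2 * N)))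

/-!
Both sides are linear in the symbol, so it suffices to compare the kernels. Since `F2 N b m` is
the discrete Fourier transform `𝓕 (b m)` on `ZMod (2N)`, the entry `(n, j)` of `OpW N b` is
`𝓕 c_m r / (2N)` with `m = j + n`, `r = j - n` and `c_m k = b m k + (-1)^k b (m + N) k`.
Modulo the shift `(m, r) ↦ (m + N, r + N)`, which leaves `𝓕 c_m r` unchanged, these pairs
`(m, r)` are exactly the pairs of equal parity. By Fourier inversion, `𝓕 c_m` vanishes on the
residues of the parity of `m` iff `c_m k + (-1)^m c_m (k + N) = 0` for all `k`; for `m, k < N`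
this expression is `Δ b` at `(m, k)`, and shifting `m` or `k` by `N` only changes its sign.
-/

open ZMod

lemma neg_one_pow_mul_self (R : Type*) [Monoid R] [HasDistribNeg R] (n : ℕ) :
    (-1 : R) ^ n * (-1) ^ n = 1 := by
  rw [← pow_add, ← two_mul, pow_mul, neg_one_sq, one_pow]

section DFT

variable {M : ℕ} [NeZero M] {E : Type*} [AddCommGroup E] [Module ℂ E]

lemma dft_comp_add_right (f : ZMod M → E) (s r : ZMod M) :
    𝓕 (fun k ↦ f (k + s)) r = stdAddChar (s * r) • 𝓕 f r := by
  simp only [dft_apply, Finset.smul_sum, smul_smul, ← AddChar.map_add_eq_mul]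
  refine Fintype.sum_equiv (Equiv.addRight s) _ _ fun k ↦ ?_
  simp only [Equiv.coe_addRight]
  congr 2
  ring

lemma dft_stdAddChar_smul (f : ZMod M → E) (s r : ZMod M) :
    𝓕 (fun k ↦ stdAddChar (-(s * k)) • f k) r = 𝓕 f (r + s) := by
  simp only [dft_apply, smul_smul, ← AddChar.map_add_eq_mul]
  refine Finset.sum_congr rfl fun k _ ↦ ?_
  congr 2
  ring

end DFT

lemma natCast_add_self_eq_zero (N : ℕ) : (N : ZMod (2 * N)) + N = 0 := by
  rw [← two_mul]
  exact_mod_cast ZMod.natCast_self (2 * N)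

lemma neg_natCast_mul (N : ℕ) (x : ZMod (2 * N)) : -((N : ZMod (2 * N)) * x) = N * x := by
  linear_combination (-x) * natCast_add_self_eq_zero N

section Parity

variable {N : ℕ} [NeZero N]

lemma stdAddChar_natCast_mul (x : ZMod (2 * N)) :
    stdAddChar ((N : ZMod (2 * N)) * x) = (-1 : ℂ) ^ x.val := by
  have hN : (N : ℂ) ≠ 0 := Nat.cast_ne_zero.2 (NeZero.ne N)
  have hx : (N : ZMod (2 * N)) * x = ((N * x.val : ℤ) : ZMod (2 * N)) := by
    push_cast
    rw [ZMod.natCast_zmod_val]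
  rw [hx, stdAddChar_coe, ← Complex.exp_pi_mul_I, ← Complex.exp_nat_mul]
  congr 1
  push_cast
  field_simp

lemma neg_one_pow_val_add (x y : ZMod (2 * N)) :
    (-1 : ℂ) ^ (x + y).val = (-1) ^ x.val * (-1) ^ y.val := by
  simp only [← stdAddChar_natCast_mul, mul_add, AddChar.map_add_eq_mul]

lemma neg_one_pow_val_eq_iff (m r : ZMod (2 * N)) :
    (-1 : ℂ) ^ r.val = (-1) ^ m.val ↔ ∃ t, r = m + 2 * t := by
  constructor
  · intro h
    have hsub : (-1 : ℂ) ^ (r - m).val = 1 := by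
      rw [← add_sub_cancel m r, neg_one_pow_val_add] at h
      exact (mul_eq_left₀ (pow_ne_zero _ (by norm_num))).1 h
    obtain ⟨q, hq⟩ := (neg_one_pow_eq_one_iff_even (by norm_num)).1 hsub
    refine ⟨q, ?_⟩
    have := congrArg (fun n : ℕ ↦ (n : ZMod (2 * N))) hq
    simp only [ZMod.natCast_zmod_val, Nat.cast_add] at this
    linear_combination this
  · rintro ⟨t, rfl⟩
    rw [neg_one_pow_val_add, ← stdAddChar_natCast_mul (2 * t), ← mul_assoc,
      mul_comm (N : ZMod (2 * N)) 2,
      (by linear_combination natCast_add_self_eq_zero N : (2 : ZMod (2 * N)) * N = 0),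
      zero_mul, AddChar.map_zero_eq_one, mul_one]

lemma exists_natCast_val_eq_or (x : ZMod (2 * N)) :
    ∃ j : ZMod N, (j.val : ZMod (2 * N)) = x ∨ (j.val : ZMod (2 * N)) + N = x := by
  refine ⟨x.val, ?_⟩
  rw [ZMod.val_natCast]
  rcases lt_or_ge x.val N with h | h
  · left
    rw [Nat.mod_eq_of_lt h, ZMod.natCast_zmod_val]
  · right
    rw [Nat.mod_eq_sub_mod h, Nat.mod_eq_of_lt (by have := ZMod.val_lt x; omega), ← Nat.cast_add,
      Nat.sub_add_cancel h, ZMod.natCast_zmod_val]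

lemma dft_eq_zero_on_parity_class_iff (f : ZMod (2 * N) → ℂ) (m : ZMod (2 * N)) :
    (∀ r, (-1 : ℂ) ^ r.val = (-1) ^ m.val → 𝓕 f r = 0) ↔
      ∀ k, f k + (-1) ^ m.val * f (k + N) = 0 := by
  set g : ZMod (2 * N) → ℂ := f + (-1 : ℂ) ^ m.val • fun k ↦ f (k + N) with hg
  have hdft (r : ZMod (2 * N)) : 𝓕 g r = (1 + (-1) ^ m.val * (-1) ^ r.val) * 𝓕 f r := by
    rw [hg, map_add, LinearEquiv.map_smul, Pi.add_apply, Pi.smul_apply, dft_comp_add_right,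
      stdAddChar_natCast_mul, smul_eq_mul, smul_eq_mul]
    ring
  have hsign (r : ZMod (2 * N)) : (1 + (-1) ^ m.val * (-1) ^ r.val) * 𝓕 f r = 0 ↔
      ((-1 : ℂ) ^ r.val = (-1) ^ m.val → 𝓕 f r = 0) := by
    rcases neg_one_pow_eq_or ℂ m.val with hm | hm <;>
      rcases neg_one_pow_eq_or ℂ r.val with hr | hr <;> norm_num [hm, hr]
  calc (∀ r, (-1 : ℂ) ^ r.val = (-1) ^ m.val → 𝓕 f r = 0)
      ↔ ∀ r, 𝓕 g r = 0 := forall_congr' fun r ↦ by rw [hdft, hsign]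
    _ ↔ g = 0 := by rw [← LinearEquiv.map_eq_zero_iff 𝓕, funext_iff]; rfl
    _ ↔ ∀ k, f k + (-1) ^ m.val * f (k + N) = 0 := funext_iff

end Parity

section Fold

variable {N : ℕ} (a : ZMod (2 * N) → ZMod (2 * N) → ℂ)

def foldFst (m k : ZMod (2 * N)) : ℂ := a m k + (-1) ^ k.val * a (m + N) k

def foldBoth (m k : ZMod (2 * N)) : ℂ := foldFst a m k + (-1) ^ m.val * foldFst a m (k + N)

lemma foldFst_add_natCast (m k : ZMod (2 * N)) :
    foldFst a (m + N) k = (-1) ^ k.val * foldFst a m k := by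
  simp only [foldFst, add_assoc, natCast_add_self_eq_zero, add_zero]
  linear_combination (-a (m + N) k) * neg_one_pow_mul_self ℂ k.val

lemma foldBoth_add_natCast_right (m k : ZMod (2 * N)) :
    foldBoth a m (k + N) = (-1) ^ m.val * foldBoth a m k := by
  simp only [foldBoth, add_assoc, natCast_add_self_eq_zero, add_zero]
  linear_combination (-foldFst a m (k + N)) * neg_one_pow_mul_self ℂ m.val

variable [NeZero N]

lemma foldBoth_add_natCast_left (m k : ZMod (2 * N)) :
    foldBoth a (m + N) k = (-1) ^ k.val * foldBoth a m k := by
  simp only [foldBoth, foldFst_add_natCast, neg_one_pow_val_add]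
  linear_combination ((-1) ^ m.val * (-1) ^ k.val * foldFst a m (k + N)) *
    neg_one_pow_mul_self ℂ (N : ZMod (2 * N)).val

lemma dft_foldFst_add_natCast (m r : ZMod (2 * N)) :
    𝓕 (foldFst a (m + N)) (r + N) = 𝓕 (foldFst a m) r := by
  have : foldFst a (m + N) = fun k ↦ stdAddChar (-((N : ZMod (2 * N)) * k)) • foldFst a m k := by
    ext k
    rw [foldFst_add_natCast, neg_natCast_mul, stdAddChar_natCast_mul, smul_eq_mul]
  rw [this, dft_stdAddChar_smul, add_assoc, natCast_add_self_eq_zero, add_zero]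

lemma Delta_eq_foldBoth (j k : ZMod N) : Delta N a j k = foldBoth a j.val k.val := by
  have hval (i : ZMod N) : ((i.val : ZMod (2 * N))).val = i.val :=
    ZMod.val_natCast_of_lt (by have := ZMod.val_lt i; omega)
  have hN : (N : ZMod (2 * N)).val = N := ZMod.val_natCast_of_lt (by have := NeZero.ne N; omega)
  simp only [Delta, foldBoth, foldFst, neg_one_pow_val_add, hval, hN, pow_add]
  ring

lemma forall_foldBoth_eq_zero_iff : (∀ m k, foldBoth a m k = 0) ↔ Delta N a = 0 := by
  refine ⟨fun h ↦ ?_, fun h m k ↦ ?_⟩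
  · ext j k
    rw [Delta_eq_foldBoth, h, Matrix.zero_apply]
  · obtain ⟨j, rfl | rfl⟩ := exists_natCast_val_eq_or m <;>
      obtain ⟨k, rfl | rfl⟩ := exists_natCast_val_eq_or k <;>
      simp only [foldBoth_add_natCast_left, foldBoth_add_natCast_right, ← Delta_eq_foldBoth, h,
        Matrix.zero_apply, mul_zero]

lemma F2_eq_dft (m : ZMod (2 * N)) : F2 N a m = 𝓕 (a m) := by
  ext r
  rw [F2, dft_apply]
  refine Finset.sum_congr rfl fun k _ ↦ ?_
  have hkr : -(k * r) = Int.cast (-(k.val * r.val : ℤ)) := by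
    push_cast
    simp only [ZMod.natCast_zmod_val]
  rw [smul_eq_mul, mul_comm, hkr, stdAddChar_coe]
  congr 2
  push_cast
  ring

lemma F2_add_F2_add_natCast (m r : ZMod (2 * N)) :
    F2 N a m r + F2 N a (m + N) (r + N) = 𝓕 (foldFst a m) r := by
  have : foldFst a m = a m + fun k ↦ stdAddChar (-((N : ZMod (2 * N)) * k)) • a (m + N) k := by
    ext k
    rw [foldFst, Pi.add_apply, neg_natCast_mul, stdAddChar_natCast_mul, smul_eq_mul]
  rw [this, map_add, Pi.add_apply, dft_stdAddChar_smul, F2_eq_dft, F2_eq_dft]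

lemma OpW_apply (n j : ZMod N) :
    OpW N a n j = (2 * N : ℂ)⁻¹ *
      𝓕 (foldFst a (j.val + n.val)) ((j.val : ZMod (2 * N)) - n.val) := by
  simp only [OpW, one_div, F2_add_F2_add_natCast]

lemma OpW_eq_zero_iff : OpW N a = 0 ↔
    ∀ m r : ZMod (2 * N), (-1 : ℂ) ^ r.val = (-1) ^ m.val → 𝓕 (foldFst a m) r = 0 := by
  have hOp (n j : ZMod N) : OpW N a n j = 0 ↔
      𝓕 (foldFst a (j.val + n.val)) ((j.val : ZMod (2 * N)) - n.val) = 0 := by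
    simp [OpW_apply, NeZero.ne N]
  refine ⟨fun h m r hr ↦ ?_, fun h ↦ ?_⟩
  · obtain ⟨t, rfl⟩ := (neg_one_pow_val_eq_iff m r).1 hr
    -- `n ≡ -t` and `j ≡ m + t` modulo `N` give `(j + n, j - n) ≡ (m, m + 2t)` modulo `(N, N)`.
    obtain ⟨n, hn⟩ := exists_natCast_val_eq_or (-t)
    obtain ⟨j, hj⟩ := exists_natCast_val_eq_or (m - (n.val : ZMod (2 * N)))
    have hdiff : (j.val : ZMod (2 * N)) - n.val = j.val + n.val + 2 * t := by
      rcases hn with hn | hn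
      · linear_combination (-2) * hn
      · linear_combination (-2) * hn + natCast_add_self_eq_zero N
    have hsum : (j.val : ZMod (2 * N)) + n.val = m ∨ (j.val : ZMod (2 * N)) + n.val = m + N := by
      refine hj.imp (fun hj ↦ by linear_combination hj) (fun hj ↦ ?_)
      linear_combination hj - natCast_add_self_eq_zero N
    have h0 := (hOp n j).1 (by rw [h, Matrix.zero_apply])
    rw [hdiff] at h0
    rcases hsum with hs | hs <;> rw [hs] at h0
    · exact h0
    · rwa [add_right_comm, dft_foldFst_add_natCast] at h0
  · ext n j
    rw [Matrix.zero_apply, hOp]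
    exact h _ _ ((neg_one_pow_val_eq_iff _ _).2 ⟨-n.val, by ring⟩)

lemma OpW_eq_zero_iff_Delta_eq_zero : OpW N a = 0 ↔ Delta N a = 0 := by
  rw [OpW_eq_zero_iff, ← forall_foldBoth_eq_zero_iff]
  exact forall_congr' fun m ↦ dft_eq_zero_on_parity_class_iff (foldFst a m) m

lemma OpW_sub (a' : ZMod (2 * N) → ZMod (2 * N) → ℂ) :
    OpW N (a - a') = OpW N a - OpW N a' := by
  ext n j
  simp only [OpW, F2_eq_dft, Pi.sub_apply, map_sub, Matrix.sub_apply]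
  ring

lemma Delta_sub (a' : ZMod (2 * N) → ZMod (2 * N) → ℂ) :
    Delta N (a - a') = Delta N a - Delta N a' := by
  ext j k
  simp only [Delta, Pi.sub_apply, Matrix.sub_apply]
  ring

end Fold

/-- two sampled symbols yield the same Weyl matrix iff `Δ` agrees on them. -/
theorem opW_eq_iff_delta_eq (N : ℕ) [NeZero N] (a a' : ZMod (2 * N) → ZMod (2 * N) → ℂ) :
    OpW N a = OpW N a' ↔ Delta N a = Delta N a' := by
  rw [← sub_eq_zero, ← OpW_sub, OpW_eq_zero_iff_Delta_eq_zero, Delta_sub, sub_eq_zero]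
end
end

section
/- Dequantization inverts quantization: for any N×N complex matrix A, define its discrete Wigner transform W̃(A)(r,s) = (1/(2N)) Σ_{l=0}^{N-1} A_{l, r-l mod N} exp(-πi(2l - r)s/N) for r,s ∈ Z/2NZ. Then the sampled symbol a(r,s) := N·W̃(A)(r,s) satisfies Op(a) = A, where (Op(a))_{n,j} = (1/(2N))[F₂a(j+n, j-n) + F₂a(j+n+N, j-n+N)] and F₂a(m,r) = Σ_{k=0}^{2N-1} a(m,k) exp(-2πi r k/(2N)). -/
open scoped BigOperators
open Complex

noncomputable section

/-- The discrete Wigner transform of an `N × N` matrix. -/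
def WtMat (N : ℕ) [NeZero N] (A : Matrix (ZMod N) (ZMod N) ℂ) (r s : ZMod (2 * N)) : ℂ :=
  (1 / (2 * N : ℂ)) * ∑ l : ZMod N,
    A l (ZMod.castHom (dvd_mul_left N 2) (ZMod N) r - l) *
      Complex.exp (-(Real.pi : ℂ) * Complex.I *
        ((2 * (l.val : ℤ) - (r.val : ℤ) : ℤ) : ℂ) * (s.val : ℂ) / (N : ℂ))

/-! Writing every phase as the standard character `ψ` of `ZMod (2N)`, the two Fourier sums
combine into `∑ₖ ψ(k (m - r - 2l))`, which by orthogonality equals `2N` when `2l = m - r` and `0`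
otherwise. On both diagonals sampled by `Op` one has `m - r = 2n`, and `2l = 2n` in `ZMod (2N)`
forces `l = n`, so each of the two `F₂` terms equals `N · A n j`. -/

open ZMod

lemma exp_fourier_phase_eq_stdAddChar (M : ℕ) [NeZero M] (r k : ZMod M) :
    exp (-2 * (Real.pi : ℂ) * I * (r.val : ℂ) * (k.val : ℂ) / (M : ℂ)) = stdAddChar (-(r * k)) := by
  have := stdAddChar_coe (N := M) (-(r.val * k.val : ℤ))
  push_cast [natCast_zmod_val] at this
  rw [this]; congr 1; ring

lemma exp_wigner_phase_eq_stdAddChar (N : ℕ) [NeZero N] (l : ZMod N) (r s : ZMod (2 * N)) :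
    exp (-(Real.pi : ℂ) * I * ((2 * (l.val : ℤ) - (r.val : ℤ) : ℤ) : ℂ) * (s.val : ℂ) / (N : ℂ))
      = stdAddChar ((r - 2 * (l.val : ZMod (2 * N))) * s) := by
  have := stdAddChar_coe (N := 2 * N) ((r.val - 2 * l.val) * s.val : ℤ)
  push_cast [natCast_zmod_val] at this
  rw [this]; congr 1; push_cast; field_simp; ring

lemma two_mul_natCast_val_inj {N : ℕ} [NeZero N] {l n : ZMod N} :
    2 * (l.val : ZMod (2 * N)) = 2 * (n.val : ZMod (2 * N)) ↔ l = n := by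
  refine ⟨fun h => val_injective N ?_, fun h => h ▸ rfl⟩
  have hl := val_lt l
  have hn := val_lt n
  have h' : ((2 * l.val : ℕ) : ZMod (2 * N)) = ((2 * n.val : ℕ) : ZMod (2 * N)) := by
    push_cast; exact h
  rw [natCast_eq_natCast_iff', Nat.mod_eq_of_lt (by omega), Nat.mod_eq_of_lt (by omega)] at h'
  omega

lemma F2_eq_sum_stdAddChar (N : ℕ) [NeZero N] (a : ZMod (2 * N) → ZMod (2 * N) → ℂ)
    (m r : ZMod (2 * N)) : F2 N a m r = ∑ k, a m k * stdAddChar (-(r * k)) := by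
  simp only [F2, ← exp_fourier_phase_eq_stdAddChar, Nat.cast_mul, Nat.cast_ofNat]

lemma WtMat_eq_sum_stdAddChar (N : ℕ) [NeZero N] (A : Matrix (ZMod N) (ZMod N) ℂ)
    (r s : ZMod (2 * N)) :
    WtMat N A r s = (1 / (2 * N : ℂ)) * ∑ l : ZMod N,
      A l (castHom (dvd_mul_left N 2) (ZMod N) r - l) *
        stdAddChar ((r - 2 * (l.val : ZMod (2 * N))) * s) := by
  simp only [WtMat, exp_wigner_phase_eq_stdAddChar]

lemma F2_wigner_eq_sum_ite (N : ℕ) [NeZero N] (A : Matrix (ZMod N) (ZMod N) ℂ)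
    (m r : ZMod (2 * N)) :
    F2 N (fun r s => (N : ℂ) * WtMat N A r s) m r
      = N * ∑ l : ZMod N, if m - r - 2 * (l.val : ZMod (2 * N)) = 0
          then A l (castHom (dvd_mul_left N 2) (ZMod N) m - l) else 0 := by
  have hN : (N : ℂ) ≠ 0 := Nat.cast_ne_zero.mpr (NeZero.ne N)
  have phase (l : ZMod N) (k : ZMod (2 * N)) :
      stdAddChar ((m - 2 * (l.val : ZMod (2 * N))) * k) * stdAddChar (-(r * k))
        = stdAddChar (k * (m - r - 2 * (l.val : ZMod (2 * N)))) := by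
    rw [← AddChar.map_add_eq_mul]; ring_nf
  calc F2 N (fun r s => (N : ℂ) * WtMat N A r s) m r
      = (1 / 2 : ℂ) * ∑ l : ZMod N, A l (castHom (dvd_mul_left N 2) (ZMod N) m - l) *
          ∑ k, stdAddChar (k * (m - r - 2 * (l.val : ZMod (2 * N)))) := by
        simp only [F2_eq_sum_stdAddChar, WtMat_eq_sum_stdAddChar, Finset.mul_sum, Finset.sum_mul,
          ← phase]
        rw [Finset.sum_comm]
        refine Finset.sum_congr rfl fun l _ => Finset.sum_congr rfl fun k _ => ?_
        field_simp
    _ = _ := by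
        simp only [AddChar.sum_mulShift _ (isPrimitive_stdAddChar _), card, Finset.mul_sum]
        refine Finset.sum_congr rfl fun l _ => ?_
        split_ifs <;> push_cast <;> ring

lemma F2_wigner_of_sub_eq (N : ℕ) [NeZero N] (A : Matrix (ZMod N) (ZMod N) ℂ)
    {m r : ZMod (2 * N)} {n : ZMod N} (hmr : m - r = 2 * (n.val : ZMod (2 * N))) :
    F2 N (fun r s => (N : ℂ) * WtMat N A r s) m r
      = N * A n (castHom (dvd_mul_left N 2) (ZMod N) m - n) := by
  simp only [F2_wigner_eq_sum_ite, hmr, sub_eq_zero, two_mul_natCast_val_inj, eq_comm (a := n),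
    Finset.sum_ite_eq', Finset.mem_univ, if_true]

/-- dequantization inverts quantization: the sampled symbol
`a(r,s) = N · W̃(A)(r,s)` has Weyl matrix `A`. -/
theorem dequantization (N : ℕ) [NeZero N] (A : Matrix (ZMod N) (ZMod N) ℂ) :
    OpW N (fun r s => (N : ℂ) * WtMat N A r s) = A := by
  ext n j
  have hN : (N : ℂ) ≠ 0 := Nat.cast_ne_zero.mpr (NeZero.ne N)
  rw [OpW, F2_wigner_of_sub_eq N A (n := n) (by ring), F2_wigner_of_sub_eq N A (n := n) (by ring)]
  simp only [map_add, map_natCast, natCast_zmod_val, natCast_self, add_zero, add_sub_cancel_right]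
  field_simp
  ring
end
end
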